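/- Let P be a well-founded tree. (a) If rank(P) ≥ β, then rank(P \ P^β) = β. (b) If β, γ are ordinals and t ∈ P^{β+γ}, then for every ordinal ζ one has [P(t) ∩ (P^β \ P^{β+γ})]^ζ = P(t) ∩ (P^{β+ζ} \ P^{β+γ}), and rank(P(t) ∩ (P^β \ P^{β+γ})) = γ. -/

import Mathlib

open Ordinal Set

universe u

/-- The set of maximal elements ("leaves") of `P`. -/
def treeLeaves {α : Type u} [PartialOrder α] (P : Set α) : Set α :=
  {t ∈ P | ∀ s ∈ P, ¬ t < s}

/-- The derivative `P' = P \ Leaves P`. -/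
def treeDeriv {α : Type u} [PartialOrder α] (P : Set α) : Set α :=
  P \ treeLeaves P

/-- The transfinite iterated derivative `P^ξ`. -/
noncomputable def derivIter {α : Type u} [PartialOrder α] (P : Set α) (ξ : Ordinal.{u}) :
    Set α :=
  Ordinal.limitRecOn ξ P (fun _ ih => treeDeriv ih)
    (fun o _ ih => ⋂ (ζ : Set.Iio o), ih ζ.1 ζ.2)

/-- `P` is a tree: every ancestor set is well-ordered (a well-founded chain). -/
def IsTree {α : Type u} [PartialOrder α] (P : Set α) : Prop :=
  ∀ t ∈ P, IsChain (· ≤ ·) {s ∈ P | s ≤ t} ∧ {s ∈ P | s ≤ t}.WellFoundedOn (· < ·)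

/-- `P` is well-founded: some transfinite derivative is empty. -/
def IsWFTree {α : Type u} [PartialOrder α] (P : Set α) : Prop :=
  ∃ ξ : Ordinal.{u}, derivIter P ξ = ∅

/-- The rank of a well-founded tree: the least `ξ` with `P^ξ = ∅`. -/
noncomputable def treeRank {α : Type u} [PartialOrder α] (P : Set α) : Ordinal.{u} :=
  sInf {ξ | derivIter P ξ = ∅}

/-- `τ_P(t)`: the largest ordinal `ξ` with `t ∈ P^ξ`. -/
noncomputable def treeTau {α : Type u} [PartialOrder α] (P : Set α) (t : α) : Ordinal.{u} :=
  sSup {ξ | t ∈ derivIter P ξ}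

/-- `τ_{P,β}(t)`: the largest ordinal `ξ` with `t ∈ P^{β·ξ}`. -/
noncomputable def treeTauMul {α : Type u} [PartialOrder α] (P : Set α) (β : Ordinal.{u})
    (t : α) : Ordinal.{u} :=
  sSup {ξ | t ∈ derivIter P (β * ξ)}

/-- `alpProd ε i = ω^{ω^{ε 0}} · ⋯ · ω^{ω^{ε i}}`. -/
noncomputable def alpProd (ε : ℕ → Ordinal.{u}) : ℕ → Ordinal.{u}
  | 0 => omega0 ^ omega0 ^ ε 0
  | (i + 1) => alpProd ε i * omega0 ^ omega0 ^ ε (i + 1)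

/-- The separation function `ς_P` of a tree whose rank has decomposition
`ω^{ω^{ε 0}} ⋯ ω^{ω^{ε l}}`: the least `i` such that `s, t` lie in the same block
`P^{α_i·δ} \ P^{α_i·(δ+1)}` for some ordinal `δ`. -/
noncomputable def sep {α : Type u} [PartialOrder α] (P : Set α) (ε : ℕ → Ordinal.{u})
    (s t : α) : ℕ :=
  sInf {i : ℕ | ∃ δ : Ordinal.{u},
    s ∈ derivIter P (alpProd ε i * δ) \ derivIter P (alpProd ε i * (δ + 1)) ∧
    t ∈ derivIter P (alpProd ε i * δ) \ derivIter P (alpProd ε i * (δ + 1))}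

/-- `indProd ε A l = ω^{ω^{ε 0}·1_A(0)} ⋯ ω^{ω^{ε l}·1_A(l)}`. -/
noncomputable def indProd (ε : ℕ → Ordinal.{u}) (A : Set ℕ) : ℕ → Ordinal.{u}
  | 0 => omega0 ^ (omega0 ^ ε 0 * A.indicator (fun _ => (1 : Ordinal.{u})) 0)
  | (i + 1) => indProd ε A i *
      omega0 ^ (omega0 ^ ε (i + 1) * A.indicator (fun _ => (1 : Ordinal.{u})) (i + 1))

/-- `sumPow ε i = ω^{ε 0} + ⋯ + ω^{ε (i-1)}` (the partial sums `γ_i`). -/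
noncomputable def sumPow (ε : ℕ → Ordinal.{u}) : ℕ → Ordinal.{u}
  | 0 => 0
  | (i + 1) => sumPow ε i + omega0 ^ ε i

/-- `indSum ε A i = Σ_{n < i} 1_A(n)·ω^{ε n}`. -/
noncomputable def indSum (ε : ℕ → Ordinal.{u}) (A : Set ℕ) : ℕ → Ordinal.{u}
  | 0 => 0
  | (i + 1) => indSum ε A i + A.indicator (fun _ => (1 : Ordinal.{u})) i * omega0 ^ ε i


/-!
Removing the leaves of a block `A ∩ (P^δ \ P^μ)`, with `A` upward closed in `P`, only raises its
lower level to `δ + 1`: every element of `P^{δ+1}` lies below an element of `P^δ \ P^{δ+1}`, namely a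
maximal element of `P^δ` above it. Such maximal elements exist because the first level at which an
element leaves the derivative sequence strictly decreases along `<`. Both ranks are then read off
from the block formula `[A ∩ (P^β \ P^μ)]^ζ = A ∩ (P^{β+ζ} \ P^μ)`.
-/

section DerivIter

variable {α : Type u} [PartialOrder α] {P Q A : Set α} {s u : α}

theorem mem_treeDeriv : s ∈ treeDeriv Q ↔ s ∈ Q ∧ ∃ v ∈ Q, s < v := by
  simp [treeDeriv, treeLeaves]

theorem treeLeaves_subset_diff_treeDeriv : treeLeaves Q ⊆ Q \ treeDeriv Q :=
  fun _ hx => ⟨hx.1, fun h => h.2 hx⟩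

theorem derivIter_zero (P : Set α) : derivIter P 0 = P :=
  Ordinal.limitRecOn_zero _ _ _

theorem derivIter_add_one (P : Set α) (ξ : Ordinal.{u}) :
    derivIter P (ξ + 1) = treeDeriv (derivIter P ξ) :=
  Ordinal.limitRecOn_add_one _ _ _ _

theorem mem_derivIter_of_isSuccLimit {ξ : Ordinal.{u}} (hξ : Order.IsSuccLimit ξ) :
    s ∈ derivIter P ξ ↔ ∀ η < ξ, s ∈ derivIter P η := by
  rw [derivIter, Ordinal.limitRecOn_limit _ _ _ _ hξ]
  simp [derivIter]

theorem derivIter_anti (P : Set α) : Antitone (derivIter P) := by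
  intro ζ ξ hζξ
  induction ξ using Ordinal.limitRecOn with
  | zero => rw [nonpos_iff_eq_zero.mp hζξ]
  | add_one ξ ih =>
    rcases hζξ.lt_or_eq with hlt | rfl
    · rw [derivIter_add_one]
      exact sdiff_subset.trans (ih (Order.lt_add_one_iff.mp hlt))
    · rfl
  | limit ξ hξ _ =>
    rcases hζξ.lt_or_eq with hlt | rfl
    · exact fun s hs => (mem_derivIter_of_isSuccLimit hξ).mp hs ζ hlt
    · rfl

theorem derivIter_subset (P : Set α) (ξ : Ordinal.{u}) : derivIter P ξ ⊆ P :=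
  (derivIter_anti P (zero_le : 0 ≤ ξ)).trans (derivIter_zero P).subset

theorem mem_derivIter_of_lt (hs : s ∈ P) (hsu : s < u) {ξ : Ordinal.{u}}
    (hu : ∀ η < ξ, u ∈ derivIter P η) : s ∈ derivIter P ξ := by
  induction ξ using Ordinal.limitRecOn with
  | zero => rwa [derivIter_zero]
  | add_one ξ ih =>
    rw [derivIter_add_one, mem_treeDeriv]
    exact ⟨ih fun η hη => hu η (hη.trans (Order.lt_add_one_iff.mpr le_rfl)),
      u, hu ξ (Order.lt_add_one_iff.mpr le_rfl), hsu⟩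
  | limit ξ hξ ih =>
    exact (mem_derivIter_of_isSuccLimit hξ).mpr fun η hη =>
      ih η hη fun η' hη' => hu η' (hη'.trans hη)

theorem mem_derivIter_add_one_of_lt (hs : s ∈ P) (hsu : s < u) {ξ : Ordinal.{u}}
    (hu : u ∈ derivIter P ξ) : s ∈ derivIter P (ξ + 1) :=
  mem_derivIter_of_lt hs hsu fun _ hη => derivIter_anti P (Order.lt_add_one_iff.mp hη) hu

theorem mem_derivIter_add_of_isSuccLimit {β ζ : Ordinal.{u}} (hζ : Order.IsSuccLimit ζ) :
    s ∈ derivIter P (β + ζ) ↔ ∀ η < ζ, s ∈ derivIter P (β + η) := by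
  rw [mem_derivIter_of_isSuccLimit (Ordinal.isSuccLimit_add β hζ)]
  refine ⟨fun h η hη => h _ (add_lt_add_right hη β), fun h ρ hρ => ?_⟩
  rcases lt_or_ge ρ β with hρβ | hβρ
  · exact derivIter_anti P (by simpa using hρβ.le) (h 0 hζ.bot_lt)
  · rw [← Ordinal.add_sub_cancel_of_le hβρ] at hρ ⊢
    exact h _ ((add_lt_add_iff_left β).mp hρ)

end DerivIter

section Rank

variable {α : Type u} [PartialOrder α] {X : Set α}

theorem derivIter_nonempty_of_lt_treeRank {ζ : Ordinal.{u}} (h : ζ < treeRank X) :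
    (derivIter X ζ).Nonempty :=
  nonempty_iff_ne_empty.mpr fun he => (csInf_le' (s := {ξ | derivIter X ξ = ∅}) he).not_gt h

theorem treeRank_eq {γ : Ordinal.{u}} (hγ : derivIter X γ = ∅)
    (hlt : ∀ ζ < γ, (derivIter X ζ).Nonempty) : treeRank X = γ :=
  IsLeast.csInf_eq ⟨hγ, fun ζ hζ => not_lt.mp fun h => (hlt ζ h).ne_empty hζ⟩

end Rank

section WellFounded

variable {α : Type u} [PartialOrder α] {P Q : Set α} {s u : α}

/-- For `s ∈ P` this is `τ_P(s) + 1`. -/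
noncomputable def exitLevel (P : Set α) (s : α) : Ordinal.{u} :=
  sInf {η | s ∉ derivIter P η}

theorem IsWFTree.mem_derivIter_iff_lt_exitLevel (hWF : IsWFTree P) {η : Ordinal.{u}} :
    s ∈ derivIter P η ↔ η < exitLevel P s := by
  obtain ⟨ξ, hξ⟩ := hWF
  have hne : {η | s ∉ derivIter P η}.Nonempty := ⟨ξ, by simp [hξ]⟩
  refine ⟨fun hs => not_le.mp fun hle => csInf_mem hne (derivIter_anti P hle hs), fun hlt => ?_⟩
  by_contra hs
  exact (csInf_le' hs).not_gt hlt

theorem IsWFTree.exitLevel_lt_of_lt (hWF : IsWFTree P) (hs : s ∈ P) (hsu : s < u) :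
    exitLevel P u < exitLevel P s :=
  hWF.mem_derivIter_iff_lt_exitLevel.mp <|
    mem_derivIter_of_lt hs hsu fun _ hη => hWF.mem_derivIter_iff_lt_exitLevel.mpr hη

theorem IsWFTree.treeLeaves_nonempty (hWF : IsWFTree P) (hQP : Q ⊆ P) (hQ : Q.Nonempty) :
    (treeLeaves Q).Nonempty := by
  obtain ⟨v, hvQ, hv⟩ := (InvImage.wf (exitLevel P) wellFounded_lt).has_min Q hQ
  exact ⟨v, hvQ, fun w hwQ hvw => hv w hwQ (hWF.exitLevel_lt_of_lt (hQP hvQ) hvw)⟩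

theorem IsWFTree.exists_gt_mem_diff_derivIter_add_one (hWF : IsWFTree P) {ξ : Ordinal.{u}}
    (hs : s ∈ derivIter P (ξ + 1)) :
    ∃ v, s < v ∧ v ∈ derivIter P ξ \ derivIter P (ξ + 1) := by
  rw [derivIter_add_one, mem_treeDeriv] at hs
  obtain ⟨-, w, hw, hsw⟩ := hs
  obtain ⟨v, ⟨hv, hsv⟩, hmax⟩ := hWF.treeLeaves_nonempty
    (Q := {v ∈ derivIter P ξ | s < v}) (fun v hv => derivIter_subset P ξ hv.1) ⟨w, hw, hsw⟩
  refine ⟨v, hsv, hv, fun hv' => ?_⟩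
  rw [derivIter_add_one, mem_treeDeriv] at hv'
  obtain ⟨-, x, hx, hvx⟩ := hv'
  exact hmax x ⟨hx, hsv.trans hvx⟩ hvx

end WellFounded

section Block

variable {α : Type u} [PartialOrder α] {P A : Set α}

theorem IsWFTree.treeDeriv_block (hWF : IsWFTree P) (hAP : A ⊆ P)
    (hA : ∀ ⦃s v⦄, s ∈ A → s < v → v ∈ P → v ∈ A) (δ μ : Ordinal.{u}) :
    treeDeriv (A ∩ (derivIter P δ \ derivIter P μ)) =
      A ∩ (derivIter P (δ + 1) \ derivIter P μ) := by
  ext s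
  rw [mem_treeDeriv]
  constructor
  · rintro ⟨⟨hsA, -, hsμ⟩, v, ⟨-, hvδ, -⟩, hsv⟩
    exact ⟨hsA, mem_derivIter_add_one_of_lt (hAP hsA) hsv hvδ, hsμ⟩
  · rintro ⟨hsA, hsδ, hsμ⟩
    have hδμ : δ + 1 ≤ μ := not_lt.mp fun h => hsμ (derivIter_anti P h.le hsδ)
    obtain ⟨v, hsv, hvδ, hvδ'⟩ := hWF.exists_gt_mem_diff_derivIter_add_one hsδ
    have hvA : v ∈ A := hA hsA hsv (derivIter_subset P δ hvδ)
    exact ⟨⟨hsA, derivIter_anti P le_self_add hsδ, hsμ⟩,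
      v, ⟨hvA, hvδ, fun h => hvδ' (derivIter_anti P hδμ h)⟩, hsv⟩

theorem IsWFTree.derivIter_block (hWF : IsWFTree P) (hAP : A ⊆ P)
    (hA : ∀ ⦃s v⦄, s ∈ A → s < v → v ∈ P → v ∈ A) (β μ ζ : Ordinal.{u}) :
    derivIter (A ∩ (derivIter P β \ derivIter P μ)) ζ =
      A ∩ (derivIter P (β + ζ) \ derivIter P μ) := by
  induction ζ using Ordinal.limitRecOn with
  | zero => rw [derivIter_zero, add_zero]
  | add_one ζ ih => rw [derivIter_add_one, ih, hWF.treeDeriv_block hAP hA, add_assoc]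
  | limit ζ hζ ih =>
    ext s
    simp only [mem_derivIter_of_isSuccLimit hζ, mem_inter_iff, mem_sdiff,
      mem_derivIter_add_of_isSuccLimit hζ]
    constructor
    · intro h
      obtain ⟨hsA, -, hsμ⟩ := (ih 0 hζ.bot_lt).subset (h 0 hζ.bot_lt)
      exact ⟨hsA, fun η hη => ((ih η hη).subset (h η hη)).2.1, hsμ⟩
    · rintro ⟨hsA, hs, hsμ⟩ η hη
      exact (ih η hη).superset ⟨hsA, hs η hη, hsμ⟩

end Block

theorem statement11_general {α : Type u} [PartialOrder α] (P : Set α)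
    (hWF : IsWFTree P) :
    (∀ β : Ordinal.{u}, β ≤ treeRank P → treeRank (P \ derivIter P β) = β) ∧
    (∀ β γ : Ordinal.{u}, ∀ t ∈ derivIter P (β + γ),
      (∀ ζ : Ordinal.{u},
        derivIter ({s ∈ P | t < s} ∩ (derivIter P β \ derivIter P (β + γ))) ζ =
          {s ∈ P | t < s} ∩ (derivIter P (β + ζ) \ derivIter P (β + γ))) ∧
      treeRank ({s ∈ P | t < s} ∩ (derivIter P β \ derivIter P (β + γ))) = γ) := by
  refine ⟨fun β hβ => ?_, fun β γ t ht => ?_⟩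
  · have hblock (ζ : Ordinal.{u}) :
        derivIter (P \ derivIter P β) ζ = derivIter P ζ \ derivIter P β := by
      have h := hWF.derivIter_block subset_rfl (fun _ _ _ _ hv => hv) 0 β ζ
      rwa [derivIter_zero, zero_add, inter_eq_right.mpr sdiff_subset,
        inter_eq_right.mpr (sdiff_subset.trans (derivIter_subset P ζ))] at h
    refine treeRank_eq (by rw [hblock, sdiff_self]) fun ζ hζ => ?_
    rw [hblock]
    obtain ⟨s, hs⟩ := hWF.treeLeaves_nonempty (derivIter_subset P ζ)
      (derivIter_nonempty_of_lt_treeRank (hζ.trans_le hβ))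
    obtain ⟨hsζ, hsζ'⟩ := treeLeaves_subset_diff_treeDeriv hs
    rw [← derivIter_add_one] at hsζ'
    exact ⟨s, hsζ, fun h => hsζ' (derivIter_anti P (Order.add_one_le_of_lt hζ) h)⟩
  · have hblock := hWF.derivIter_block (A := {s ∈ P | t < s}) (fun _ hs => hs.1)
      (fun _ _ hs hsv hv => ⟨hv, hs.2.trans hsv⟩) β (β + γ)
    refine ⟨hblock, treeRank_eq (by rw [hblock, sdiff_self, inter_empty]) fun ζ hζ => ?_⟩
    rw [hblock]
    have hle : β + ζ + 1 ≤ β + γ := by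
      rw [add_assoc]; exact (add_le_add_iff_left β).mpr (Order.add_one_le_of_lt hζ)
    obtain ⟨v, htv, hv, hv'⟩ :=
      hWF.exists_gt_mem_diff_derivIter_add_one (derivIter_anti P hle ht)
    exact ⟨v, ⟨derivIter_subset P _ hv, htv⟩, hv, fun h => hv' (derivIter_anti P hle h)⟩

/-- for a well-founded tree `P`:
(a) if `rank(P) ≥ β` then `rank(P \ P^β) = β`;
(b) if `t ∈ P^{β+γ}` then `[P(t) ∩ (P^β \ P^{β+γ})]^ζ = P(t) ∩ (P^{β+ζ} \ P^{β+γ})`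
for every `ζ`, and `rank(P(t) ∩ (P^β \ P^{β+γ})) = γ`. -/
theorem statement11 {α : Type u} [PartialOrder α] (P : Set α) (hP : IsTree P)
    (hWF : IsWFTree P) :
    (∀ β : Ordinal.{u}, β ≤ treeRank P → treeRank (P \ derivIter P β) = β) ∧
    (∀ β γ : Ordinal.{u}, ∀ t ∈ derivIter P (β + γ),
      (∀ ζ : Ordinal.{u},
        derivIter ({s ∈ P | t < s} ∩ (derivIter P β \ derivIter P (β + γ))) ζ =
          {s ∈ P | t < s} ∩ (derivIter P (β + ζ) \ derivIter P (β + γ))) ∧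
      treeRank ({s ∈ P | t < s} ∩ (derivIter P β \ derivIter P (β + γ))) = γ) :=
  statement11_general P hWF
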